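/- Let Λ be an r-rich, α-degenerate k-flat with respect to a finite point multiset M, with 0 ≤ α < 1. Then for each 0 ≤ k' ≤ k, the number of ordered lists of k'+1 affinely independent points of M contained in Λ is at least (1-α)^{k'} r^{k'+1}. -/

import Mathlib

open Module

/-! Grow independent tuples one point at a time. An affinely independent tuple of `n + 1` points
of `Λ` with `n < k` spans an `n`-flat, which lies in some `(k - 1)`-subflat of `Λ`; that subflat
holds at most `α N` of the `N` points of `Λ`, so at least `(1 - α) N ≥ (1 - α) r` points extend
the tuple to an independent one. -/

theorem Set.ncard_mul_le_ncard_of_snoc_mem {α : Type*} [Finite α] {n : ℕ}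
    (A : Set (Fin n → α)) (B : Set (Fin (n + 1) → α)) {c : ℝ}
    (h : ∀ f ∈ A, c ≤ {i | Fin.snoc f i ∈ B}.ncard) : A.ncard * c ≤ B.ncard := by
  classical
  have := Fintype.ofFinite α
  let T : Finset (Σ _ : Fin n → α, α) :=
    A.toFinset.sigma fun f => {i | Fin.snoc f i ∈ B}.toFinset
  calc A.ncard * c = ∑ _f ∈ A.toFinset, c := by
        simp [Set.ncard_eq_toFinset_card', mul_comm]
    _ ≤ ∑ f ∈ A.toFinset, ({i | Fin.snoc f i ∈ B}.ncard : ℝ) :=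
        Finset.sum_le_sum fun f hf => h f (Set.mem_toFinset.mp hf)
    _ = T.card := by
        simp [T, Set.ncard_eq_toFinset_card']
    _ ≤ B.ncard := by
        rw [Set.ncard_eq_toFinset_card']
        refine Nat.cast_le.mpr (Finset.card_le_card_of_injOn (fun x => Fin.snoc x.1 x.2) ?_ ?_)
        · intro x hx
          simpa [T] using (Finset.mem_sigma.mp hx).2
        · rintro ⟨f, i⟩ - ⟨g, j⟩ - hfg
          obtain ⟨rfl, rfl⟩ := Fin.snoc_injective2 hfg
          rfl

section
variable {k V P : Type*} [Field k] [AddCommGroup V] [Module k V] [AddTorsor V P]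

theorem AffineIndependent.snoc {n : ℕ} {q : Fin n → P} (hq : AffineIndependent k q) {x : P}
    (hx : x ∉ affineSpan k (Set.range q)) :
    AffineIndependent k (Fin.snoc q x : Fin (n + 1) → P) := by
  refine AffineIndependent.affineIndependent_of_notMem_span (i := Fin.last n) ?_ ?_
  · rw [← affineIndependent_equiv (finSuccAboveEquiv (Fin.last n))]
    convert hq using 1
    funext j
    simp [finSuccAboveEquiv_apply]
  · have himage : (Fin.snoc q x : Fin (n + 1) → P) '' {y | y ≠ Fin.last n} = Set.range q := by
      ext y; simp [Fin.exists_fin_succ']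
    simpa [himage] using hx

theorem Submodule.exists_le_le_finrank_eq [FiniteDimensional k V] {W₀ U : Submodule k V}
    (h : W₀ ≤ U) {d : ℕ} (hd₀ : finrank k W₀ ≤ d) (hd : d ≤ finrank k U) :
    ∃ W : Submodule k V, W₀ ≤ W ∧ W ≤ U ∧ finrank k W = d := by
  obtain ⟨c, rfl⟩ := Nat.exists_eq_add_of_le hd₀
  induction c generalizing W₀ with
  | zero => exact ⟨W₀, le_rfl, h, rfl⟩
  | succ c ih =>
    obtain ⟨x, hxU, hxW₀⟩ := SetLike.not_le_iff_exists.mp fun hU =>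
      (Submodule.finrank_mono hU).not_gt (by omega : finrank k W₀ < finrank k U)
    have hrank := finrank_sup_span_singleton hxW₀
    obtain ⟨W, hW₁, hWU, hW⟩ := ih (W₀ := W₀ ⊔ span k {x})
      (sup_le h (by simpa [span_le] using hxU)) (by omega) (by omega)
    exact ⟨W, le_sup_left.trans hW₁, hWU, by omega⟩

namespace AffineSubspace

theorem exists_le_le_finrank_direction_eq [FiniteDimensional k V] {E Λ : AffineSubspace k P}
    (hE : (E : Set P).Nonempty) (h : E ≤ Λ) {d : ℕ} (hd₀ : finrank k E.direction ≤ d)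
    (hd : d ≤ finrank k Λ.direction) :
    ∃ Λ' : AffineSubspace k P, E ≤ Λ' ∧ Λ' ≤ Λ ∧ finrank k Λ'.direction = d := by
  obtain ⟨x, hx⟩ := hE
  obtain ⟨W, hEW, hWΛ, hW⟩ := Submodule.exists_le_le_finrank_eq (direction_le h) hd₀ hd
  refine ⟨mk' x W, ?_, ?_, by rwa [direction_mk']⟩
  · rw [← mk'_eq hx]; exact (mk'_le_mk'_iff x).mpr hEW
  · rw [← mk'_eq (h hx)]; exact (mk'_le_mk'_iff x).mpr hWΛ

variable {ι : Type*}

def indepTuples (Λ : AffineSubspace k P) (p : ι → P) (m : ℕ) : Set (Fin m → ι) :=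
  {f | (∀ j, p (f j) ∈ Λ) ∧ AffineIndependent k (p ∘ f)}

def IsDegenerate (Λ : AffineSubspace k P) (p : ι → P) (α : ℝ) : Prop :=
  ∀ Λ' : AffineSubspace k P, Λ' ≤ Λ → finrank k Λ'.direction = finrank k Λ.direction - 1 →
    ({i | p i ∈ Λ'}.ncard : ℝ) ≤ α * {i | p i ∈ Λ}.ncard

variable {Λ : AffineSubspace k P} {p : ι → P}

theorem snoc_mem_indepTuples {m : ℕ} {f : Fin m → ι} (hf : f ∈ Λ.indepTuples p m) {i : ι}
    (hiΛ : p i ∈ Λ) (hi : p i ∉ affineSpan k (Set.range (p ∘ f))) :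
    Fin.snoc f i ∈ Λ.indepTuples p (m + 1) := by
  refine ⟨Fin.forall_fin_succ'.mpr ⟨by simpa using hf.1, by simpa using hiΛ⟩, ?_⟩
  rw [Fin.comp_snoc]
  exact hf.2.snoc hi

variable [FiniteDimensional k V] [Finite ι] {α : ℝ}

theorem le_ncard_snoc_mem_indepTuples (hdeg : Λ.IsDegenerate p α) {n : ℕ}
    (hn : n < finrank k Λ.direction) {f : Fin (n + 1) → ι} (hf : f ∈ Λ.indepTuples p (n + 1)) :
    (1 - α) * {i | p i ∈ Λ}.ncard ≤ {i | Fin.snoc f i ∈ Λ.indepTuples p (n + 2)}.ncard := by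
  set E := affineSpan k (Set.range (p ∘ f))
  have hEΛ : E ≤ Λ := affineSpan_le.mpr (Set.range_subset_iff.mpr hf.1)
  have hE : finrank k E.direction = n := by
    rw [direction_affineSpan]; exact hf.2.finrank_vectorSpan (by simp)
  obtain ⟨Λ', hEΛ', hΛ'Λ, hΛ'⟩ := exists_le_le_finrank_direction_eq (E := E)
    ((Set.range_nonempty _).mono (subset_affineSpan k _)) hEΛ (d := finrank k Λ.direction - 1)
    (by omega) (by omega)
  have hcover : {i | p i ∈ Λ} ⊆
      {i | Fin.snoc f i ∈ Λ.indepTuples p (n + 2)} ∪ {i | p i ∈ Λ'} := by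
    intro i hiΛ
    by_cases hiΛ' : p i ∈ Λ'
    · exact Or.inr hiΛ'
    · exact Or.inl (snoc_mem_indepTuples hf hiΛ fun hiE => hiΛ' (hEΛ' hiE))
  have hcount : ({i | p i ∈ Λ}.ncard : ℝ) ≤
      {i | Fin.snoc f i ∈ Λ.indepTuples p (n + 2)}.ncard + {i | p i ∈ Λ'}.ncard := by
    exact_mod_cast (Set.ncard_le_ncard hcover).trans (Set.ncard_union_le _ _)
  linarith [hdeg Λ' hΛ'Λ hΛ']

theorem pow_mul_le_ncard_indepTuples (hdeg : Λ.IsDegenerate p α) (hα : α ≤ 1) {n : ℕ}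
    (hn : n ≤ finrank k Λ.direction) :
    ((1 - α) * {i | p i ∈ Λ}.ncard) ^ n * {i | p i ∈ Λ}.ncard ≤
      (Λ.indepTuples p (n + 1)).ncard := by
  set N : ℝ := ({i | p i ∈ Λ}.ncard : ℝ)
  induction n with
  | zero =>
    have hconst : {i | p i ∈ Λ}.ncard ≤ (Λ.indepTuples p 1).ncard :=
      Set.ncard_le_ncard_of_injOn (fun i _ => i)
        (fun _ hi => ⟨fun _ => hi, affineIndependent_of_subsingleton k _⟩)
        (fun _ _ _ _ hij => congrFun hij 0)
    simpa [N] using hconst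
  | succ n ih =>
    have hc : 0 ≤ (1 - α) * N := mul_nonneg (sub_nonneg.mpr hα) (Nat.cast_nonneg _)
    calc ((1 - α) * N) ^ (n + 1) * N = ((1 - α) * N) ^ n * N * ((1 - α) * N) := by ring
      _ ≤ (Λ.indepTuples p (n + 1)).ncard * ((1 - α) * N) := by
        gcongr; exact ih (by omega)
      _ ≤ (Λ.indepTuples p (n + 2)).ncard :=
        Set.ncard_mul_le_ncard_of_snoc_mem _ _ fun _ hf =>
          le_ncard_snoc_mem_indepTuples hdeg (by omega) hf

end AffineSubspace

end

theorem stmt_3_general {V : Type*} [AddCommGroup V] [Module ℝ V] [FiniteDimensional ℝ V]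
    {ι : Type*} [Fintype ι] (p : ι → V) (k k' : ℕ) (hk' : k' ≤ k)
    (r α : ℝ) (hr : 0 ≤ r) (hα1 : α < 1)
    (Λ : AffineSubspace ℝ V)
    (hdim : finrank ℝ Λ.direction = k)
    (hrich : r ≤ ({i : ι | p i ∈ Λ}.ncard : ℝ))
    (hdeg : ∀ Λ' : AffineSubspace ℝ V, Λ' ≤ Λ → finrank ℝ Λ'.direction = k - 1 →
      ({i : ι | p i ∈ Λ'}.ncard : ℝ) ≤ α * ({i : ι | p i ∈ Λ}.ncard : ℝ)) :
    (1 - α) ^ k' * r ^ (k' + 1) ≤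
      (({f : Fin (k' + 1) → ι | (∀ j, p (f j) ∈ Λ) ∧
          AffineIndependent ℝ (p ∘ f)}).ncard : ℝ) := by
  subst hdim
  have hα : 0 ≤ 1 - α := by linarith
  calc (1 - α) ^ k' * r ^ (k' + 1) = ((1 - α) * r) ^ k' * r := by
        rw [mul_pow, pow_succ]; ring
    _ ≤ ((1 - α) * {i | p i ∈ Λ}.ncard) ^ k' * {i | p i ∈ Λ}.ncard := by gcongr
    _ ≤ _ := Λ.pow_mul_le_ncard_indepTuples hdeg hα1.le hk'

/-- Let `Λ` be an `r`-rich, `α`-degenerate `k`-flat with respect to a finite point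
multiset `M` (encoded as a finite indexed family `p : ι → V`), with `0 ≤ α < 1`.
Then for each `0 ≤ k' ≤ k`, the number of ordered lists of `k'+1` affinely
independent points of `M` contained in `Λ` (counted with multiplicity, i.e. lists of
indices) is at least `(1-α)^{k'} r^{k'+1}`. -/
theorem stmt_3 {V : Type*} [AddCommGroup V] [Module ℝ V] [FiniteDimensional ℝ V]
    {ι : Type*} [Fintype ι] (p : ι → V) (k k' : ℕ) (hk' : k' ≤ k)
    (r α : ℝ) (hr : 0 ≤ r) (hα0 : 0 ≤ α) (hα1 : α < 1)
    (Λ : AffineSubspace ℝ V)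
    (hdim : finrank ℝ Λ.direction = k)
    (hrich : r ≤ ({i : ι | p i ∈ Λ}.ncard : ℝ))
    (hdeg : ∀ Λ' : AffineSubspace ℝ V, Λ' ≤ Λ → finrank ℝ Λ'.direction = k - 1 →
      ({i : ι | p i ∈ Λ'}.ncard : ℝ) ≤ α * ({i : ι | p i ∈ Λ}.ncard : ℝ)) :
    (1 - α) ^ k' * r ^ (k' + 1) ≤
      (({f : Fin (k' + 1) → ι | (∀ j, p (f j) ∈ Λ) ∧
          AffineIndependent ℝ (p ∘ f)}).ncard : ℝ) :=
  stmt_3_general p k k' hk' r α hr hα1 Λ hdim hrich hdeg
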